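/- arXiv:2308.12678 — 2 statements merged into one kernel-verified Lean document; each statement's English description precedes it below -/
import Mathlib

section
/- Let h > 0, κ > 0, t ∈ [0, 1], s ≥ 0, c ∈ [0, 1), and let D, q, K be real numbers with |q| ≤ s·t², K = κ(1 - t²) + h² - s²/(8h²) - κ²t⁴/(16h²) - (κ/(4h²))·q + D, and K - D ≤ c·h². Then s²/(8h²) + κ·s/(4h²) ≥ (1 - c)·h² - κ²/(16h²) = (1/(16h²))·(4√(1-c)·h² - κ)·(4√(1-c)·h² + κ). -/
/-- The key algebraic inequality in the proof of the PMC theorem in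
`𝕄ⁿ(κ) × ℝ` for `κ > 0`: with `h = |H| > 0`, `t = |T| ∈ [0,1]`, `s = |S| ≥ 0`,
`c ∈ [0,1)`, `q = ⟪ST, T⟫` satisfying `|q| ≤ s t²`, `D = Σ_{i>1} det Aᵢ`, `K`
the Gaussian curvature given by the curvature identity, and `K - D ≤ c h²`,
one has `s²/(8h²) + κ s/(4h²) ≥ (1-c) h² - κ²/(16h²)
  = (1/(16h²)) (4√(1-c) h² - κ)(4√(1-c) h² + κ)`. -/
theorem pmc_kappa_pos_inequality
    (h κ t s c D q K : ℝ)
    (hh : 0 < h) (hκ : 0 < κ)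
    (ht0 : 0 ≤ t) (ht1 : t ≤ 1)
    (hs : 0 ≤ s) (hc0 : 0 ≤ c) (hc1 : c < 1)
    (hq : |q| ≤ s * t ^ 2)
    (hK : K = κ * (1 - t ^ 2) + h ^ 2 - s ^ 2 / (8 * h ^ 2)
        - κ ^ 2 * t ^ 4 / (16 * h ^ 2) - (κ / (4 * h ^ 2)) * q + D)
    (hKD : K - D ≤ c * h ^ 2) :
    s ^ 2 / (8 * h ^ 2) + κ * s / (4 * h ^ 2)
      ≥ (1 - c) * h ^ 2 - κ ^ 2 / (16 * h ^ 2) ∧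
    (1 - c) * h ^ 2 - κ ^ 2 / (16 * h ^ 2)
      = (1 / (16 * h ^ 2)) * (4 * Real.sqrt (1 - c) * h ^ 2 - κ)
        * (4 * Real.sqrt (1 - c) * h ^ 2 + κ) := by
  have hh2 : (0:ℝ) < h ^ 2 := by positivity
  have ht2 : t ^ 2 ≤ 1 := by nlinarith
  constructor
  · have h1 : q ≤ s := le_trans (le_trans (le_abs_self q) hq)
      (by nlinarith)
    have key : (1 - c) * h ^ 2 ≤ s ^ 2 / (8 * h ^ 2)
        + κ / (4 * h ^ 2) * q + κ ^ 2 * t ^ 4 / (16 * h ^ 2) := by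
      rw [hK] at hKD
      nlinarith [mul_nonneg hκ.le (sub_nonneg.mpr ht2)]
    have b1 : κ / (4 * h ^ 2) * q ≤ κ * s / (4 * h ^ 2) := by
      rw [div_mul_eq_mul_div]
      apply div_le_div_of_nonneg_right _ (by positivity)
      nlinarith
    have b2 : κ ^ 2 * t ^ 4 / (16 * h ^ 2) ≤ κ ^ 2 / (16 * h ^ 2) := by
      apply div_le_div_of_nonneg_right _ (by positivity)
      have ht4 : t ^ 4 ≤ 1 := by nlinarith
      nlinarith [mul_nonneg (sq_nonneg κ) (sub_nonneg.mpr ht4)]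
    linarith
  · have hsq : Real.sqrt (1 - c) ^ 2 = 1 - c := Real.sq_sqrt (by linarith)
    have e : (4 * Real.sqrt (1 - c) * h ^ 2 - κ) * (4 * Real.sqrt (1 - c) * h ^ 2 + κ)
        = 16 * (1 - c) * h ^ 4 - κ ^ 2 := by
      have : (4 * Real.sqrt (1 - c) * h ^ 2 - κ) * (4 * Real.sqrt (1 - c) * h ^ 2 + κ)
          = 16 * Real.sqrt (1 - c) ^ 2 * h ^ 4 - κ ^ 2 := by ring
      rw [this, hsq]
    rw [mul_assoc, e]
    field_simp
end

section
/- Let κ > 0, θ ∈ (0, π/2), b = √(κ(1 + cos²θ)), and define f : ℝ² → ℝ⁶ by f(u,v) = ((cos θ/b)·cos(bu), (cos θ/b)·sin(bu), sin(bv)/b, cos(bv)/b, 0, u·sin θ). Then at every point (u,v) ∈ ℝ², the flat Laplacian of f satisfies ∂²f/∂u² + ∂²f/∂v² = -b²·(f - ⟨f, e₆⟩·e₆), where e₆ is the sixth standard basis vector of ℝ⁶. In particular ∂²f/∂u² + ∂²f/∂v² is at each point a multiple of the radial vector of the sphere factor S⁴(1/√κ) ⊂ ℝ⁵, hence normal to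 S⁴(1/√κ) × ℝ; this expresses that f is a minimal isometric immersion of flat ℝ² into S⁴(1/√κ) × ℝ. -/
open Real
open scoped RealInnerProductSpace

private lemma hasDerivAt_E6 {c : ℝ → Fin 6 → ℝ} {c' : Fin 6 → ℝ} {x : ℝ}
    (h : ∀ i, HasDerivAt (fun t => c t i) (c' i) x) :
    HasDerivAt (fun t => (WithLp.equiv 2 (Fin 6 → ℝ)).symm (c t))
      ((WithLp.equiv 2 (Fin 6 → ℝ)).symm c') x := by
  have h0 : HasDerivAt c c' x := hasDerivAt_pi.2 h
  let L : (Fin 6 → ℝ) →L[ℝ] EuclideanSpace ℝ (Fin 6) :=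
    (PiLp.continuousLinearEquiv 2 ℝ (fun _ : Fin 6 => ℝ)).symm.toContinuousLinearMap
  have hL : HasFDerivAt L L (c x) := L.hasFDerivAt
  exact hL.comp_hasDerivAt x h0

private lemma hasDerivAt_bmul (b x : ℝ) : HasDerivAt (fun t : ℝ => b * t) b x := by
  simpa using (hasDerivAt_id x).const_mul b

/-- The flat Laplacian of the Hou–Qiu parameterization `f` satisfies
`∂²f/∂u² + ∂²f/∂v² = -b² • (f - ⟪f, e₆⟫ • e₆)`, where `e₆` is the sixth
standard basis vector of `ℝ⁶`; i.e. the Laplacian is at each point a multiple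
of the radial vector of the sphere factor `S⁴(1/√κ)`, hence normal to
`S⁴(1/√κ) × ℝ`, expressing that `f` is a minimal isometric immersion of flat
`ℝ²` into `S⁴(1/√κ) × ℝ`. -/
theorem hou_qiu_minimal
    (κ θ b : ℝ) (hκ : 0 < κ) (hθ : θ ∈ Set.Ioo 0 (π / 2))
    (hb : b = Real.sqrt (κ * (1 + Real.cos θ ^ 2)))
    (f : ℝ × ℝ → EuclideanSpace ℝ (Fin 6))
    (hf : ∀ u v : ℝ, f (u, v) = (WithLp.equiv 2 (Fin 6 → ℝ)).symm
      ![Real.cos θ / b * Real.cos (b * u),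
        Real.cos θ / b * Real.sin (b * u),
        Real.sin (b * v) / b,
        Real.cos (b * v) / b,
        0,
        u * Real.sin θ]) :
    ∀ u v : ℝ,
      deriv (deriv (fun x : ℝ => f (x, v))) u
        + deriv (deriv (fun y : ℝ => f (u, y))) v
      = (-b ^ 2) • (f (u, v)
          - ⟪f (u, v), EuclideanSpace.single (5 : Fin 6) (1 : ℝ)⟫
            • EuclideanSpace.single (5 : Fin 6) (1 : ℝ)) := by
  have hbpos : 0 < b := by
    rw [hb]
    apply Real.sqrt_pos.2
    positivity
  have hb0 : b ≠ 0 := ne_of_gt hbpos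
  intro u v
  -- first and second derivatives in the first variable
  have hd1 : ∀ x : ℝ, HasDerivAt (fun x : ℝ => f (x, v))
      ((WithLp.equiv 2 (Fin 6 → ℝ)).symm
        ![-(Real.cos θ * Real.sin (b * x)), Real.cos θ * Real.cos (b * x),
          0, 0, 0, Real.sin θ]) x := by
    intro x
    have hfun : (fun x : ℝ => f (x, v)) = fun x : ℝ => (WithLp.equiv 2 (Fin 6 → ℝ)).symm
        ![Real.cos θ / b * Real.cos (b * x), Real.cos θ / b * Real.sin (b * x),
          Real.sin (b * v) / b, Real.cos (b * v) / b, 0, x * Real.sin θ] := by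
      funext x; exact hf x v
    rw [hfun]
    apply hasDerivAt_E6
    intro i
    fin_cases i
    · show HasDerivAt (fun x : ℝ => Real.cos θ / b * Real.cos (b * x))
        (-(Real.cos θ * Real.sin (b * x))) x
      refine (((hasDerivAt_bmul b x).cos).const_mul (Real.cos θ / b)).congr_deriv ?_
      field_simp
    · show HasDerivAt (fun x : ℝ => Real.cos θ / b * Real.sin (b * x))
        (Real.cos θ * Real.cos (b * x)) x
      refine (((hasDerivAt_bmul b x).sin).const_mul (Real.cos θ / b)).congr_deriv ?_
      field_simp
    · exact hasDerivAt_const _ _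
    · exact hasDerivAt_const _ _
    · exact hasDerivAt_const _ _
    · show HasDerivAt (fun x : ℝ => x * Real.sin θ) (Real.sin θ) x
      simpa using (hasDerivAt_id x).mul_const (Real.sin θ)
  have hd1' : HasDerivAt (fun x : ℝ => (WithLp.equiv 2 (Fin 6 → ℝ)).symm
        ![-(Real.cos θ * Real.sin (b * x)), Real.cos θ * Real.cos (b * x),
          0, 0, 0, Real.sin θ])
      ((WithLp.equiv 2 (Fin 6 → ℝ)).symm
        ![-(b * Real.cos θ * Real.cos (b * u)), -(b * Real.cos θ * Real.sin (b * u)),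
          0, 0, 0, 0]) u := by
    apply hasDerivAt_E6
    intro i
    fin_cases i
    · show HasDerivAt (fun x : ℝ => -(Real.cos θ * Real.sin (b * x)))
        (-(b * Real.cos θ * Real.cos (b * u))) u
      refine ((((hasDerivAt_bmul b u).sin).const_mul (Real.cos θ)).neg).congr_deriv ?_
      ring
    · show HasDerivAt (fun x : ℝ => Real.cos θ * Real.cos (b * x))
        (-(b * Real.cos θ * Real.sin (b * u))) u
      refine (((hasDerivAt_bmul b u).cos).const_mul (Real.cos θ)).congr_deriv ?_
      ring
    · exact hasDerivAt_const _ _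
    · exact hasDerivAt_const _ _
    · exact hasDerivAt_const _ _
    · exact hasDerivAt_const _ _
  -- first and second derivatives in the second variable
  have hd2 : ∀ y : ℝ, HasDerivAt (fun y : ℝ => f (u, y))
      ((WithLp.equiv 2 (Fin 6 → ℝ)).symm
        ![0, 0, Real.cos (b * y), -Real.sin (b * y), 0, 0]) y := by
    intro y
    have hfun : (fun y : ℝ => f (u, y)) = fun y : ℝ => (WithLp.equiv 2 (Fin 6 → ℝ)).symm
        ![Real.cos θ / b * Real.cos (b * u), Real.cos θ / b * Real.sin (b * u),
          Real.sin (b * y) / b, Real.cos (b * y) / b, 0, u * Real.sin θ] := by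
      funext y; exact hf u y
    rw [hfun]
    apply hasDerivAt_E6
    intro i
    fin_cases i
    · exact hasDerivAt_const _ _
    · exact hasDerivAt_const _ _
    · show HasDerivAt (fun y : ℝ => Real.sin (b * y) / b) (Real.cos (b * y)) y
      refine (((hasDerivAt_bmul b y).sin).div_const b).congr_deriv ?_
      field_simp
    · show HasDerivAt (fun y : ℝ => Real.cos (b * y) / b) (-Real.sin (b * y)) y
      refine (((hasDerivAt_bmul b y).cos).div_const b).congr_deriv ?_
      field_simp
    · exact hasDerivAt_const _ _
    · exact hasDerivAt_const _ _
  have hd2' : HasDerivAt (fun y : ℝ => (WithLp.equiv 2 (Fin 6 → ℝ)).symm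
        ![0, 0, Real.cos (b * y), -Real.sin (b * y), 0, 0])
      ((WithLp.equiv 2 (Fin 6 → ℝ)).symm
        ![0, 0, -(b * Real.sin (b * v)), -(b * Real.cos (b * v)), 0, 0]) v := by
    apply hasDerivAt_E6
    intro i
    fin_cases i
    · exact hasDerivAt_const _ _
    · exact hasDerivAt_const _ _
    · show HasDerivAt (fun y : ℝ => Real.cos (b * y)) (-(b * Real.sin (b * v))) v
      convert (hasDerivAt_bmul b v).cos using 1
      ring
    · show HasDerivAt (fun y : ℝ => -Real.sin (b * y)) (-(b * Real.cos (b * v))) v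
      refine (((hasDerivAt_bmul b v).sin).neg).congr_deriv ?_
      ring
    · exact hasDerivAt_const _ _
    · exact hasDerivAt_const _ _
  have e1 : deriv (fun x : ℝ => f (x, v)) = fun x : ℝ => (WithLp.equiv 2 (Fin 6 → ℝ)).symm
      ![-(Real.cos θ * Real.sin (b * x)), Real.cos θ * Real.cos (b * x),
        0, 0, 0, Real.sin θ] := funext fun x => (hd1 x).deriv
  have e2 : deriv (fun y : ℝ => f (u, y)) = fun y : ℝ => (WithLp.equiv 2 (Fin 6 → ℝ)).symm
      ![0, 0, Real.cos (b * y), -Real.sin (b * y), 0, 0] := funext fun y => (hd2 y).deriv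
  rw [e1, e2, hd1'.deriv, hd2'.deriv, hf u v]
  have hinner : ⟪((WithLp.equiv 2 (Fin 6 → ℝ)).symm
      ![Real.cos θ / b * Real.cos (b * u), Real.cos θ / b * Real.sin (b * u),
        Real.sin (b * v) / b, Real.cos (b * v) / b, 0, u * Real.sin θ] :
        EuclideanSpace ℝ (Fin 6)),
      EuclideanSpace.single (5 : Fin 6) (1 : ℝ)⟫ = u * Real.sin θ := by
    rw [EuclideanSpace.inner_single_right]
    norm_num
    rfl
  rw [hinner]
  apply PiLp.ext
  intro i
  fin_cases i
  · show -(b * Real.cos θ * Real.cos (b * u)) + 0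
      = -b ^ 2 * (Real.cos θ / b * Real.cos (b * u) - u * Real.sin θ * 0)
    field_simp; ring
  · show -(b * Real.cos θ * Real.sin (b * u)) + 0
      = -b ^ 2 * (Real.cos θ / b * Real.sin (b * u) - u * Real.sin θ * 0)
    field_simp; ring
  · show 0 + -(b * Real.sin (b * v))
      = -b ^ 2 * (Real.sin (b * v) / b - u * Real.sin θ * 0)
    field_simp; ring
  · show 0 + -(b * Real.cos (b * v))
      = -b ^ 2 * (Real.cos (b * v) / b - u * Real.sin θ * 0)
    field_simp; ring
  · show (0 : ℝ) + 0 = -b ^ 2 * (0 - u * Real.sin θ * 0)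
    ring
  · show (0 : ℝ) + 0 = -b ^ 2 * (u * Real.sin θ - u * Real.sin θ * 1)
    ring
end
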